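/- Fix E < 0 and let q(ξ) = 4 Σ_{j=1}^d sinh²(ξ_j/2), K^E = {ξ ∈ ℝ^d : q(ξ) ≤ |E|}, and ρ_E(x) = sup_{ξ ∈ K^E} ⟨x, ξ⟩. Then ρ_E is differentiable at every x ∈ ℝ^d ∖ {0}, its gradient is ∂ρ_E(x) = G_E^{-1}(x/|x|) where G_E : ∂K^E → 𝕊^{d−1} is the Gauss map G_E(ξ) = ∂q(ξ)/|∂q(ξ)|, and ρ_E satisfies the eikonal equation q(∂ρ_E(x)) = |E| for every x ∈ ℝ^d ∖ {0}. -/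

import Mathlib

open MeasureTheory Real

noncomputable section

/-- `q(ξ) = 4 Σ_j sinh²(ξ_j/2)`. -/
def qfun {d : ℕ} (ξ : EuclideanSpace ℝ (Fin d)) : ℝ :=
  4 * ∑ j, Real.sinh (ξ j / 2) ^ 2

/-- `ρ_E(x) = sup_{ξ ∈ K^E} ⟨x, ξ⟩` with `K^E = {ξ : q(ξ) ≤ |E|}`. -/
def rhoE {d : ℕ} (E : ℝ) (x : EuclideanSpace ℝ (Fin d)) : ℝ :=
  sSup {r | ∃ ξ : EuclideanSpace ℝ (Fin d), qfun ξ ≤ |E| ∧ r = (inner ℝ x ξ : ℝ)}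

/-!
`K^E` is a compact sublevel set of the strictly convex function `q`, so for `x ≠ 0` the functional
`⟨x, ·⟩` has a unique maximiser `ξ` on `K^E`; it lies on `∂K^E` because a nonzero linear functional
has no interior maximum. Uniqueness forces maximisers for nearby `y` to stay close to `ξ`, and this
is exactly what makes the support function `ρ_E` differentiable at `x` with gradient `ξ`. The
Lagrange multiplier rule at `ξ` makes `∂q(ξ)` parallel to `x`, and the sign is fixed by
`⟨∂q(ξ), ξ⟩ > 0` together with `⟨x, ξ⟩ ≥ ⟨x, 0⟩ = 0`.
-/

open Set Filter Topology RealInnerProductSpace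

section

variable {F : Type*} [NormedAddCommGroup F] [InnerProductSpace ℝ F]

theorem sSup_image_inner_eq_of_isMaxOn {K : Set F} {y ξ : F} (hξ : ξ ∈ K)
    (hmax : IsMaxOn (inner ℝ y) K ξ) : sSup (inner ℝ y '' K) = ⟪y, ξ⟫ :=
  IsGreatest.csSup_eq ⟨mem_image_of_mem _ hξ, forall_mem_image.2 hmax⟩

theorem eventually_dist_lt_of_isMaxOn_inner {K : Set F} (hK : IsCompact K) {x ξ₀ : F}
    (hξ₀ : ξ₀ ∈ K) (hmax : ∀ ξ ∈ K, ξ ≠ ξ₀ → ⟪x, ξ⟫ < ⟪x, ξ₀⟫) {ε : ℝ} (hε : 0 < ε) :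
    ∀ᶠ y in 𝓝 x, ∀ ξ ∈ K, IsMaxOn (inner ℝ y) K ξ → dist ξ ξ₀ < ε := by
  -- tube lemma: the strict inequality at `x` persists uniformly on the compact `K \ ball ξ₀ ε`
  have hfar : ∀ᶠ y in 𝓝 x, ∀ ξ ∈ K \ Metric.ball ξ₀ ε, ⟪y, ξ⟫ < ⟪y, ξ₀⟫ := by
    refine (hK.diff Metric.isOpen_ball).eventually_forall_of_forall_eventually
      fun ξ ⟨hξK, hξε⟩ => ContinuousAt.eventually_lt (by fun_prop) (by fun_prop) ?_
    exact hmax ξ hξK (by rintro rfl; exact hξε (Metric.mem_ball_self hε))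
  filter_upwards [hfar] with y hy ξ hξ hξmax
  by_contra! hfarξ
  exact (hy ξ ⟨hξ, fun h => (Metric.mem_ball.1 h).not_ge hfarξ⟩).not_ge (hξmax hξ₀)

theorem hasGradientAt_sSup_image_inner [CompleteSpace F] {K : Set F} (hK : IsCompact K)
    {x ξ₀ : F} (hξ₀ : ξ₀ ∈ K) (hmax : ∀ ξ ∈ K, ξ ≠ ξ₀ → ⟪x, ξ⟫ < ⟪x, ξ₀⟫) :
    HasGradientAt (fun y => sSup (inner ℝ y '' K)) ξ₀ x := by
  have hmax₀ : IsMaxOn (inner ℝ x) K ξ₀ := isMaxOn_iff.2 fun ξ hξ => by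
    rcases eq_or_ne ξ ξ₀ with rfl | hne
    · exact le_rfl
    · exact (hmax ξ hξ hne).le
  rw [hasGradientAt_iff_hasFDerivAt, hasFDerivAt_iff_isLittleO, Asymptotics.isLittleO_iff]
  intro ε hε
  filter_upwards [eventually_dist_lt_of_isMaxOn_inner hK hξ₀ hmax hε] with y hy
  obtain ⟨ξ, hξ, hξmax⟩ := hK.exists_isMaxOn ⟨ξ₀, hξ₀⟩ (innerSL ℝ y).continuous.continuousOn
  simp only [sSup_image_inner_eq_of_isMaxOn hξ hξmax, sSup_image_inner_eq_of_isMaxOn hξ₀ hmax₀,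
    InnerProductSpace.toDual_apply_apply]
  have hlower : ⟪y, ξ₀⟫ ≤ ⟪y, ξ⟫ := hξmax hξ₀
  have hupper : ⟪x, ξ⟫ ≤ ⟪x, ξ₀⟫ := hmax₀ hξ
  have hlin : ⟪y, ξ⟫ - ⟪x, ξ₀⟫ - ⟪ξ₀, y - x⟫ = ⟪y, ξ⟫ - ⟪y, ξ₀⟫ := by
    rw [inner_sub_right, real_inner_comm ξ₀ x, real_inner_comm ξ₀ y]; ring
  have hsplit : ⟪y, ξ⟫ - ⟪y, ξ₀⟫ = ⟪y - x, ξ - ξ₀⟫ + (⟪x, ξ⟫ - ⟪x, ξ₀⟫) := by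
    simp only [inner_sub_left, inner_sub_right]; ring
  have hcs : ⟪y - x, ξ - ξ₀⟫ ≤ ‖y - x‖ * ε := by
    calc ⟪y - x, ξ - ξ₀⟫ ≤ ‖y - x‖ * ‖ξ - ξ₀‖ := real_inner_le_norm _ _
      _ ≤ ‖y - x‖ * ε := by gcongr; exact (dist_eq_norm ξ ξ₀ ▸ hy ξ hξ hξmax).le
  rw [Real.norm_eq_abs, hlin, abs_of_nonneg (sub_nonneg.2 hlower), hsplit]
  linarith

theorem eq_of_isMaxOn_inner_sublevel {f : F → ℝ} (hf : Continuous f) {c : ℝ} {x ξ : F}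
    (hx : x ≠ 0) (hξ : f ξ ≤ c) (hmax : IsMaxOn (inner ℝ x) {η | f η ≤ c} ξ) : f ξ = c := by
  refine hξ.eq_of_not_lt fun hlt => hx ?_
  have hnhds : {η | f η ≤ c} ∈ 𝓝 ξ :=
    mem_of_superset ((isOpen_lt hf continuous_const).mem_nhds hlt) fun η (h : f η < c) => h.le
  have hzero := (hmax.isLocalMax hnhds).hasFDerivAt_eq_zero (innerSL ℝ x).hasFDerivAt
  simpa using congr($hzero x)

theorem StrictConvexOn.inner_lt_of_isMaxOn {f : F → ℝ} (hf : StrictConvexOn ℝ univ f)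
    (hfc : Continuous f) {c : ℝ} {x ξ : F} (hx : x ≠ 0) (hξ : f ξ ≤ c)
    (hmax : IsMaxOn (inner ℝ x) {η | f η ≤ c} ξ) :
    ∀ η, f η ≤ c → η ≠ ξ → ⟪x, η⟫ < ⟪x, ξ⟫ := by
  intro η hη hne
  refine (hmax hη).lt_of_ne fun heq => ?_
  set m : F := (1 / 2 : ℝ) • η + (1 / 2 : ℝ) • ξ
  have hm : f m < c := by
    have := hf.2 (mem_univ η) (mem_univ ξ) hne (by norm_num : (0 : ℝ) < 1 / 2)
      (by norm_num : (0 : ℝ) < 1 / 2) (by norm_num)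
    simp only [smul_eq_mul] at this
    linarith
  have hmmax : IsMaxOn (inner ℝ x) {η | f η ≤ c} m := by
    refine isMaxOn_iff.2 fun ζ hζ => ?_
    have := isMaxOn_iff.1 hmax ζ hζ
    simp only [m, inner_add_right, real_inner_smul_right, heq]
    linarith
  exact hm.ne (eq_of_isMaxOn_inner_sublevel hfc hx hm.le hmmax)

theorem sameRay_of_isMaxOn_inner [CompleteSpace F] {f : F → ℝ} {g x ξ : F}
    (hf : HasStrictFDerivAt f (innerSL ℝ g) ξ) (hg : 0 < ⟪g, ξ⟫) (h0 : f 0 ≤ f ξ)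
    (hmax : IsMaxOn (inner ℝ x) {η | f η ≤ f ξ} ξ) : SameRay ℝ g x := by
  have hextr : IsLocalExtrOn (inner ℝ x) {η | f η = f ξ} ξ :=
    (hmax.on_subset fun η (hη : f η = f ξ) => hη.le).localize.isExtr
  obtain ⟨a, b, hab, hlin⟩ :=
    hextr.exists_multipliers_of_hasStrictFDerivAt_1d hf (innerSL ℝ x).hasStrictFDerivAt
  have hvec : a • g + b • x = 0 := by
    refine (inner_self_eq_zero (𝕜 := ℝ)).1 ?_
    simpa only [inner_add_left, real_inner_smul_left, add_apply,
      smul_apply, innerSL_apply_apply, smul_eq_mul,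
      zero_apply] using congr($hlin (a • g + b • x))
  have hb : b ≠ 0 := by
    rintro rfl
    have ha : a ≠ 0 := by simpa using hab
    have : g = 0 := by simpa [ha] using hvec
    simp [this] at hg
  have hx : x = (-a / b) • g := by
    have := congrArg (b⁻¹ • ·) (eq_neg_of_add_eq_zero_right hvec)
    simpa [smul_smul, hb, div_eq_inv_mul, mul_comm] using this
  have hμ : 0 ≤ -a / b := by
    have h0max : ⟪x, 0⟫ ≤ ⟪x, ξ⟫ := isMaxOn_iff.1 hmax 0 h0
    rw [inner_zero_right, hx, real_inner_smul_left] at h0max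
    exact nonneg_of_mul_nonneg_left h0max hg
  exact hx ▸ SameRay.sameRay_nonneg_smul_right g hμ

end

theorem strictConvexOn_univ_sum_apply {ι : Type*} [Fintype ι] {φ : ℝ → ℝ}
    (hφ : StrictConvexOn ℝ univ φ) :
    StrictConvexOn ℝ univ fun ξ : EuclideanSpace ℝ ι => ∑ j, φ (ξ j) := by
  refine ⟨convex_univ, fun a _ b _ hab s t hs ht hst => ?_⟩
  obtain ⟨j, hj⟩ : ∃ j, a j ≠ b j := by
    by_contra! h
    exact hab (PiLp.ext h)
  simp only [PiLp.add_apply, PiLp.smul_apply, smul_eq_mul, Finset.mul_sum,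
    ← Finset.sum_add_distrib]
  refine Finset.sum_lt_sum (fun i _ => ?_) ⟨j, Finset.mem_univ j, ?_⟩
  · exact hφ.convexOn.2 (mem_univ _) (mem_univ _) hs.le ht.le hst
  · exact hφ.2 (mem_univ _) (mem_univ _) hj hs ht hst

theorem four_mul_sinh_half_sq (t : ℝ) : 4 * sinh (t / 2) ^ 2 = 2 * cosh t - 2 := by
  have h := cosh_two_mul (t / 2)
  rw [mul_div_cancel₀ t two_ne_zero, cosh_sq] at h
  linarith

theorem sq_le_four_mul_sinh_half_sq (t : ℝ) : t ^ 2 ≤ 4 * sinh (t / 2) ^ 2 := by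
  have h : |t / 2| ≤ |sinh (t / 2)| := by
    rw [abs_sinh]; exact self_le_sinh_iff.2 (abs_nonneg _)
  nlinarith [sq_le_sq.2 h]

theorem mul_sinh_pos {t : ℝ} (ht : t ≠ 0) : 0 < t * sinh t := by
  rcases ht.lt_or_gt with h | h
  · exact mul_pos_of_neg_of_neg h (sinh_neg_iff.2 h)
  · exact mul_pos h (sinh_pos_iff.2 h)

theorem mul_sinh_nonneg (t : ℝ) : 0 ≤ t * sinh t := by
  rcases eq_or_ne t 0 with rfl | ht
  · simp
  · exact (mul_sinh_pos ht).le

theorem strictConvexOn_two_mul_cosh_sub_two : StrictConvexOn ℝ univ fun t => 2 * cosh t - 2 :=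
  strictConvexOn_of_deriv2_pos' convex_univ (by fun_prop) fun t _ => by
    simp [cosh_pos]

variable {d : ℕ}

theorem qfun_eq_sum_cosh (ξ : EuclideanSpace ℝ (Fin d)) : qfun ξ = ∑ j, (2 * cosh (ξ j) - 2) := by
  simp only [qfun, Finset.mul_sum, four_mul_sinh_half_sq]

@[simp]
theorem qfun_zero : qfun (0 : EuclideanSpace ℝ (Fin d)) = 0 := by
  simp [qfun]

theorem strictConvexOn_qfun : StrictConvexOn ℝ univ (qfun (d := d)) := by
  simpa only [← funext qfun_eq_sum_cosh] using
    strictConvexOn_univ_sum_apply (ι := Fin d) strictConvexOn_two_mul_cosh_sub_two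

theorem norm_sq_le_qfun (ξ : EuclideanSpace ℝ (Fin d)) : ‖ξ‖ ^ 2 ≤ qfun ξ := by
  rw [EuclideanSpace.norm_sq_eq, qfun, Finset.mul_sum]
  exact Finset.sum_le_sum fun j _ => by simpa using sq_le_four_mul_sinh_half_sq (ξ j)

def qfunGrad (ξ : EuclideanSpace ℝ (Fin d)) : EuclideanSpace ℝ (Fin d) :=
  WithLp.toLp 2 fun j => 2 * sinh (ξ j)

theorem hasStrictFDerivAt_qfun (ξ : EuclideanSpace ℝ (Fin d)) :
    HasStrictFDerivAt qfun (innerSL ℝ (qfunGrad ξ)) ξ := by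
  have hterm (j : Fin d) : HasStrictFDerivAt (fun η : EuclideanSpace ℝ (Fin d) => 2 * cosh (η j) - 2)
      ((2 * sinh (ξ j)) • EuclideanSpace.proj (𝕜 := ℝ) j) ξ := by
    have h : HasStrictDerivAt (fun t => 2 * cosh t - 2) (2 * sinh (ξ j)) (ξ j) :=
      ((hasStrictDerivAt_cosh (ξ j)).const_mul 2).sub_const 2
    exact h.comp_hasStrictFDerivAt ξ (EuclideanSpace.proj (𝕜 := ℝ) j).hasStrictFDerivAt
  have hgrad : ∑ j, (2 * sinh (ξ j)) • EuclideanSpace.proj (𝕜 := ℝ) j = innerSL ℝ (qfunGrad ξ) := by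
    ext v
    simp [qfunGrad, PiLp.inner_apply, mul_comm]
  rw [funext qfun_eq_sum_cosh, ← hgrad]
  exact HasStrictFDerivAt.fun_sum fun j _ => hterm j

theorem continuous_qfun : Continuous (qfun (d := d)) :=
  continuous_iff_continuousAt.2 fun ξ => (hasStrictFDerivAt_qfun ξ).continuousAt

theorem isCompact_qfun_le (c : ℝ) : IsCompact {ξ : EuclideanSpace ℝ (Fin d) | qfun ξ ≤ c} := by
  refine Metric.isCompact_of_isClosed_isBounded (isClosed_le continuous_qfun continuous_const) ?_
  refine (Metric.isBounded_closedBall (x := 0) (r := √c)).subset fun ξ (hξ : qfun ξ ≤ c) => ?_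
  rw [mem_closedBall_zero_iff]
  exact le_sqrt_of_sq_le ((norm_sq_le_qfun ξ).trans hξ)

theorem inner_qfunGrad_self_pos {ξ : EuclideanSpace ℝ (Fin d)} (hξ : ξ ≠ 0) :
    0 < ⟪qfunGrad ξ, ξ⟫ := by
  obtain ⟨j, hj⟩ : ∃ j, ξ j ≠ 0 := by
    by_contra! h
    exact hξ (PiLp.ext h)
  simp only [qfunGrad, PiLp.inner_apply, RCLike.inner_apply, conj_trivial]
  refine Finset.sum_pos' (fun i _ => ?_) ⟨j, Finset.mem_univ j, ?_⟩
  · nlinarith [mul_sinh_nonneg (ξ i)]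
  · nlinarith [mul_sinh_pos hj]

theorem rhoE_eq_sSup_image (E : ℝ) :
    rhoE (d := d) E = fun x => sSup (inner ℝ x '' {ξ | qfun ξ ≤ |E|}) := by
  ext x
  simp only [rhoE, image, mem_ofPred_eq, eq_comm (b := inner ℝ x _)]

theorem rhoE_eikonal_general (d : ℕ) (E : ℝ) (hE : E < 0) :
    ∀ x : EuclideanSpace ℝ (Fin d), x ≠ 0 →
      DifferentiableAt ℝ (rhoE E) x ∧
      qfun (gradient (rhoE E) x) = |E| ∧
      gradient qfun (gradient (rhoE E) x) ≠ 0 ∧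
      ‖gradient qfun (gradient (rhoE E) x)‖⁻¹ • gradient qfun (gradient (rhoE E) x) =
        ‖x‖⁻¹ • x := by
  intro x hx
  have hE' : 0 < |E| := abs_pos.2 hE.ne
  obtain ⟨ξ, hξ, hmax⟩ := (isCompact_qfun_le |E|).exists_isMaxOn ⟨0, by simp⟩
    (innerSL ℝ x).continuous.continuousOn
  have hbdry : qfun ξ = |E| := eq_of_isMaxOn_inner_sublevel continuous_qfun hx hξ hmax
  have hρ : HasGradientAt (rhoE E) ξ x := by
    rw [rhoE_eq_sSup_image]
    exact hasGradientAt_sSup_image_inner (isCompact_qfun_le |E|) hξ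
      (strictConvexOn_qfun.inner_lt_of_isMaxOn continuous_qfun hx hξ hmax)
  have hξ0 : ξ ≠ 0 := by
    rintro rfl
    exact hE'.ne (by simpa using hbdry)
  have hpos := inner_qfunGrad_self_pos hξ0
  have hgrad : qfunGrad ξ ≠ 0 := fun h => by simp [h] at hpos
  have hray : SameRay ℝ (qfunGrad ξ) x :=
    sameRay_of_isMaxOn_inner (hasStrictFDerivAt_qfun ξ) hpos (by simp [hbdry])
      (hbdry ▸ hmax)
  have hq : HasGradientAt qfun (qfunGrad ξ) ξ := (hasStrictFDerivAt_qfun ξ).hasFDerivAt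
  rw [hρ.gradient, hq.gradient]
  exact ⟨hρ.differentiableAt, hbdry, hgrad, hray.inv_norm_smul_eq hgrad hx⟩

/-- for `E < 0`, `ρ_E` is differentiable away from `0`, its gradient is
`G_E^{-1}(x/|x|)` (i.e. it lies on `∂K^E = {q = |E|}` and the Gauss map
`ξ ↦ ∂q(ξ)/|∂q(ξ)|` sends it to `x/|x|`), and `ρ_E` satisfies the eikonal equation
`q(∂ρ_E(x)) = |E|` on `ℝ^d ∖ {0}`. -/
theorem rhoE_eikonal (d : ℕ) (hd : 0 < d) (E : ℝ) (hE : E < 0) :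
    ∀ x : EuclideanSpace ℝ (Fin d), x ≠ 0 →
      DifferentiableAt ℝ (rhoE E) x ∧
      qfun (gradient (rhoE E) x) = |E| ∧
      gradient qfun (gradient (rhoE E) x) ≠ 0 ∧
      ‖gradient qfun (gradient (rhoE E) x)‖⁻¹ • gradient qfun (gradient (rhoE E) x) =
        ‖x‖⁻¹ • x :=
  rhoE_eikonal_general d E hE

end
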